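/- For all natural numbers n ≥ 1 and real parameters a, b with (1+a)n + b ≠ 0 and b/a-Pochhammer denominators nonzero, and all real x with (1+a)²x² − 4a > 0 and a ≠ 0, the Pollaczek polynomials satisfy x·P_n(x) = ((an+b)/((1+a)n+b))·P_{n+1}(x) + (n/((1+a)n+b))·P_{n-1}(x). -/

import Mathlib

/-- Rising factorial `(a)_k = a(a+1)⋯(a+k-1)`. -/
noncomputable def rf (a : ℝ) (k : ℕ) : ℝ := ∏ j ∈ Finset.range k, (a + j)

/-- `ξ = √((1+a)²x² − 4a)`. -/
noncomputable def xiP (a x : ℝ) : ℝ := Real.sqrt ((1 + a) ^ 2 * x ^ 2 - 4 * a)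

/-- `η = ((1+a)x − ξ)/(2a)`. -/
noncomputable def etaP (a x : ℝ) : ℝ := ((1 + a) * x - xiP a x) / (2 * a)

/-- The Pollaczek polynomials
`P_n(x) = η^n ∑_{k=0}^n ((-n)_k (b(x-η)/ξ)_k / ((b/a)_k k!)) (-ξ/(aη))^k`. -/
noncomputable def pollaczek (a b : ℝ) (n : ℕ) (x : ℝ) : ℝ :=
  etaP a x ^ n *
    ∑ k ∈ Finset.range (n + 1),
      rf (-(n : ℝ)) k * rf (b * (x - etaP a x) / xiP a x) k /
          (rf (b / a) k * (k.factorial : ℝ)) *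
        (-xiP a x / (a * etaP a x)) ^ k

/-!
Because `(-n)_k = 0` for `k > n`, `P_n(x) = η^n F(-n)` where `F(α) = ₂F₁(α, β; b/a; z)` with
`β = b(x - η)/ξ` and `z = -ξ/(aη)` is a terminating hypergeometric sum. The three-term relation is
then Gauss's contiguous relation
`(c - α) F(α - 1) + (2α - c + (β - α) z) F(α) + α (z - 1) F(α + 1) = 0` at `α = -n`, `c = b/a`:
its summand telescopes, being `A (k + 1) - A k` for `A (k + 1) = (α)_k (β + k) z T_k`, where
`T_k = (β)_k z^k / ((c)_k k!)`. Translating back only uses that `η` is a root of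
`a t² - (1 + a) x t + 1`, which gives `a η² (z - 1) = -1`.
-/

open Finset

lemma rf_zero (t : ℝ) : rf t 0 = 1 := prod_range_zero _

lemma rf_succ_right (t : ℝ) (k : ℕ) : rf t (k + 1) = rf t k * (t + k) := prod_range_succ _ _

lemma rf_succ_left (t : ℝ) (k : ℕ) : rf t (k + 1) = t * rf (t + 1) k := by
  rw [rf, prod_range_succ', Nat.cast_zero, add_zero, mul_comm]
  exact congrArg _ (prod_congr rfl fun i _ => by push_cast; ring)

lemma rf_neg_natCast_of_lt {j k : ℕ} (h : j < k) : rf (-(j : ℝ)) k = 0 :=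
  prod_eq_zero (mem_range.2 h) (by ring)

section Hypergeometric

variable (α β c z : ℝ)

noncomputable def hypTerm (k : ℕ) : ℝ := rf β k * z ^ k / (rf c k * k.factorial)

noncomputable def hypSum (N : ℕ) : ℝ := ∑ k ∈ range N, rf α k * hypTerm β c z k

variable {c} in
lemma hypTerm_succ_mul {k : ℕ} (hc : rf c (k + 1) ≠ 0) :
    (k + 1) * (c + k) * hypTerm β c z (k + 1) = (β + k) * z * hypTerm β c z k := by
  obtain ⟨hck, hck'⟩ := mul_ne_zero_iff.1 (rf_succ_right c k ▸ hc)
  have hk : ((k : ℝ) + 1) ≠ 0 := by positivity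
  simp only [hypTerm, rf_succ_right, pow_succ, Nat.factorial_succ, Nat.cast_mul, Nat.cast_succ]
  field_simp

variable {α} in
lemma hypSum_neg_natCast_eq {j N : ℕ} (hN : j < N) :
    hypSum (-(j : ℝ)) β c z N = hypSum (-(j : ℝ)) β c z (j + 1) :=
  eventually_constant_sum (fun k hk => by rw [rf_neg_natCast_of_lt hk, zero_mul]) hN

noncomputable def contiguousAntidiff : ℕ → ℝ
  | 0 => 0
  | k + 1 => rf α k * (β + k) * z * hypTerm β c z k

lemma contiguous_summand_eq_sub {k : ℕ} (hc : rf c k ≠ 0) :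
    ((c - α) * rf (α - 1) k + (2 * α - c + (β - α) * z) * rf α k + α * (z - 1) * rf (α + 1) k) *
        hypTerm β c z k =
      contiguousAntidiff α β c z (k + 1) - contiguousAntidiff α β c z k := by
  cases k with
  | zero => simp only [contiguousAntidiff, rf_zero]; push_cast; ring
  | succ j =>
    have hT := hypTerm_succ_mul β z hc
    have h1 : rf (α - 1) (j + 1) = (α - 1) * rf α j := by rw [rf_succ_left, sub_add_cancel]
    have h2 : α * rf (α + 1) (j + 1) = rf α j * (α + j) * (α + (j + 1)) := by
      rw [← rf_succ_left, rf_succ_right, rf_succ_right]; push_cast; ring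
    simp only [contiguousAntidiff]
    rw [h1, rf_succ_right α j]
    push_cast
    linear_combination (z - 1) * hypTerm β c z (j + 1) * h2 - rf α j * hT

variable {α c} in
theorem hypSum_contiguous {M : ℕ} (hα : rf α M = 0) (hc : ∀ k ≤ M, rf c k ≠ 0) :
    (c - α) * hypSum (α - 1) β c z (M + 1) + (2 * α - c + (β - α) * z) * hypSum α β c z (M + 1) +
      α * (z - 1) * hypSum (α + 1) β c z (M + 1) = 0 := by
  have htel : ∑ k ∈ range (M + 1),
      (contiguousAntidiff α β c z (k + 1) - contiguousAntidiff α β c z k) = 0 := by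
    rw [sum_range_sub]
    simp [contiguousAntidiff, hα]
  rw [← htel]
  simp only [hypSum, mul_sum, ← sum_add_distrib]
  refine sum_congr rfl fun k hk => ?_
  rw [← contiguous_summand_eq_sub α β c z (hc k (Nat.lt_succ_iff.1 (mem_range.1 hk)))]
  ring

variable {c} in
theorem hypSum_neg_natCast_recurrence (m : ℕ) (hc : ∀ k ≤ m + 2, rf c k ≠ 0) :
    (c + (m + 1)) * hypSum (-((m + 2 : ℕ) : ℝ)) β c z (m + 3) =
      (2 * (m + 1) + c - (β + (m + 1)) * z) * hypSum (-((m + 1 : ℕ) : ℝ)) β c z (m + 3) +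
        (m + 1) * (z - 1) * hypSum (-(m : ℝ)) β c z (m + 3) := by
  have h := hypSum_contiguous β z (rf_neg_natCast_of_lt (Nat.lt_succ_self (m + 1))) hc
  rw [show -((m + 1 : ℕ) : ℝ) - 1 = -((m + 2 : ℕ) : ℝ) by push_cast; ring,
    show -((m + 1 : ℕ) : ℝ) + 1 = -(m : ℝ) by push_cast; ring] at h
  push_cast at h ⊢
  linear_combination h

end Hypergeometric

lemma xiP_eq_sub {a : ℝ} (x : ℝ) (ha : a ≠ 0) : xiP a x = (1 + a) * x - 2 * a * etaP a x := by
  rw [etaP]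
  field_simp
  ring

lemma etaP_quadratic {a x : ℝ} (ha : a ≠ 0) (hx : 0 ≤ (1 + a) ^ 2 * x ^ 2 - 4 * a) :
    a * etaP a x ^ 2 + 1 = (1 + a) * x * etaP a x := by
  have hsq : xiP a x ^ 2 = (1 + a) ^ 2 * x ^ 2 - 4 * a := Real.sq_sqrt hx
  rw [xiP_eq_sub x ha] at hsq
  have h4a : 4 * a ≠ 0 := by positivity
  apply mul_left_cancel₀ h4a
  linear_combination hsq

lemma etaP_sq_mul_sub_one {a x : ℝ} (ha : a ≠ 0) (heta : etaP a x ≠ 0)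
    (hx : 0 ≤ (1 + a) ^ 2 * x ^ 2 - 4 * a) :
    a * etaP a x ^ 2 * (-xiP a x / (a * etaP a x) - 1) = -1 := by
  rw [xiP_eq_sub x ha]
  field_simp
  linear_combination etaP_quadratic ha hx

lemma pollaczek_eq_hypSum (a b x : ℝ) {n N : ℕ} (hN : n < N) :
    pollaczek a b n x = etaP a x ^ n *
      hypSum (-n) (b * (x - etaP a x) / xiP a x) (b / a) (-xiP a x / (a * etaP a x)) N := by
  rw [hypSum_neg_natCast_eq _ _ _ hN, pollaczek, hypSum]
  congr 1
  exact sum_congr rfl fun k _ => by rw [hypTerm]; ring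

theorem pollaczek_three_term (n : ℕ) (hn : 1 ≤ n) (a b x : ℝ)
    (ha : a ≠ 0) (hx : (1 + a) ^ 2 * x ^ 2 - 4 * a > 0)
    (hxi : xiP a x ≠ 0) (heta : etaP a x ≠ 0)
    (hdenom : (1 + a) * n + b ≠ 0)
    (hba : ∀ k ≤ n + 1, rf (b / a) k ≠ 0) :
    x * pollaczek a b n x =
      ((a * n + b) / ((1 + a) * n + b)) * pollaczek a b (n + 1) x +
        ((n : ℝ) / ((1 + a) * n + b)) * pollaczek a b (n - 1) x := by
  obtain ⟨m, rfl⟩ := Nat.exists_eq_add_of_le' hn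
  -- with `b = a c` every identity below is polynomial
  obtain ⟨c, rfl⟩ : ∃ c, b = a * c := ⟨b / a, by field_simp⟩
  rw [mul_div_cancel_left₀ c ha] at hba
  rw [Nat.add_sub_cancel, show m + 1 + 1 = m + 2 from rfl, div_mul_eq_mul_div,
    div_mul_eq_mul_div, ← add_div, eq_div_iff hdenom,
    pollaczek_eq_hypSum a _ x (N := m + 3) (n := m) (by omega),
    pollaczek_eq_hypSum a _ x (N := m + 3) (n := m + 1) (by omega),
    pollaczek_eq_hypSum a _ x (N := m + 3) (n := m + 2) (by omega), mul_div_cancel_left₀ c ha]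
  set η := etaP a x
  set ξ := xiP a x
  set w := a * c * (x - η) / ξ
  set z := -ξ / (a * η)
  have hA : a * η ^ 2 + 1 = (1 + a) * x * η := etaP_quadratic ha hx.le
  have hB : a * η ^ 2 * (z - 1) = -1 := etaP_sq_mul_sub_one ha heta hx.le
  have hC : a * η ^ 2 * (w * z) = a * c * (η ^ 2 - x * η) := by
    simp only [w, z]
    field_simp
    ring
  clear_value w z
  have hrec := hypSum_neg_natCast_recurrence w z m hba
  push_cast at hrec ⊢
  set S₀ := hypSum (-(m : ℝ)) w c z (m + 3)
  set S₁ := hypSum (-((m : ℝ) + 1)) w c z (m + 3)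
  linear_combination (-(a * η ^ (m + 2))) * hrec + η ^ m * S₁ * ((m + 1) * hB - (m + 1) * hA + hC)
    - η ^ m * (m + 1) * S₀ * hB
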